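/- Generalized SFT existence: let Ω_0 and Ω_i ⊆ ℝ^q (i = 1, …, m) be nonempty closed convex sets, F_i ⊆ ℝ^q compact convex with 0 ∈ int F_i, and let I_1, …, I_n partition {1, …, m}. Define S(x) = max_{1 ≤ k ≤ n} Σ_{i ∈ I_k} ρ_{F_i}^{Ω_i}(x). If Ω_0 is bounded, or some Ω_i is bounded, then the problem min{S(x) : x ∈ Ω_0} has an optimal solution. -/
import Mathlib

open scoped Pointwise

/-- Real-valued set-based Minkowski gauge. -/
noncomputable def rhoSR {q : ℕ} (F Ω : Set (EuclideanSpace ℝ (Fin q)))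
    (x : EuclideanSpace ℝ (Fin q)) : ℝ :=
  sInf {t : ℝ | 0 ≤ t ∧ x ∈ Ω + t • F}

section Aux

variable {q : ℕ} {F Ω : Set (EuclideanSpace ℝ (Fin q))}
  {x y : EuclideanSpace ℝ (Fin q)}

lemma aux_mem_smul {t ε : ℝ} (hε : 0 < ε) (hball : Metric.ball (0:EuclideanSpace ℝ (Fin q)) ε ⊆ F)
    (ht : 0 < t) {v : EuclideanSpace ℝ (Fin q)} (hv : ‖v‖ < t * ε) : v ∈ t • F := by
  refine ⟨t⁻¹ • v, hball ?_, ?_⟩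
  · rw [Metric.mem_ball, dist_zero_right, norm_smul, norm_inv, Real.norm_eq_abs,
      abs_of_pos ht]
    rw [inv_mul_lt_iff₀ ht]
    exact hv
  · simp [smul_smul, mul_inv_cancel₀ ht.ne']

lemma aux_Tne (hΩne : Ω.Nonempty) (hF0 : (0 : EuclideanSpace ℝ (Fin q)) ∈ interior F) (x) :
    {t : ℝ | 0 ≤ t ∧ x ∈ Ω + t • F}.Nonempty := by
  obtain ⟨ω, hω⟩ := hΩne
  obtain ⟨ε, hε, hball⟩ := Metric.mem_nhds_iff.1 (mem_interior_iff_mem_nhds.1 hF0)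
  refine ⟨(‖x - ω‖ + 1) / ε, ⟨by positivity, ?_⟩⟩
  have hmem : x - ω ∈ ((‖x - ω‖ + 1) / ε) • F := by
    refine aux_mem_smul hε hball (by positivity) ?_
    rw [div_mul_cancel₀ _ hε.ne']
    linarith
  simpa using Set.add_mem_add hω hmem
  
lemma rhoSR_nonneg : 0 ≤ rhoSR F Ω x :=
  Real.sInf_nonneg fun _ ht => ht.1

lemma aux_Tbdd : BddBelow {t : ℝ | 0 ≤ t ∧ x ∈ Ω + t • F} :=
  ⟨0, fun _ ht => ht.1⟩

lemma rhoSR_le {t : ℝ} (h : 0 ≤ t) (hmem : x ∈ Ω + t • F) : rhoSR F Ω x ≤ t :=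
  csInf_le aux_Tbdd ⟨h, hmem⟩

/-- addition of memberships -/
lemma aux_add_mem (hFconv : Convex ℝ F) {a b : ℝ} (ha : 0 ≤ a) (hb : 0 ≤ b)
    (hx : x ∈ Ω + a • F) {v : EuclideanSpace ℝ (Fin q)} (hv : v ∈ b • F) :
    x + v ∈ Ω + (a + b) • F := by
  rw [hFconv.add_smul ha hb]
  obtain ⟨ω, hω, f, hf, rfl⟩ := hx
  have h2 := Set.add_mem_add hω (Set.add_mem_add hf hv)
  rw [add_assoc]
  exact h2

/-- membership at any level strictly above rhoSR -/
lemma aux_mem_of_lt (hΩne : Ω.Nonempty) (hFconv : Convex ℝ F)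
    (hF0 : (0 : EuclideanSpace ℝ (Fin q)) ∈ interior F) {c : ℝ}
    (hc : rhoSR F Ω x < c) : x ∈ Ω + c • F := by
  obtain ⟨t, ⟨ht0, htm⟩, htc⟩ := exists_lt_of_csInf_lt (aux_Tne hΩne hF0 x) hc
  -- x ∈ Ω + t • F and t < c; add (c - t) • F ∋ 0
  have h0F : (0 : EuclideanSpace ℝ (Fin q)) ∈ F := interior_subset hF0
  have : x + (c - t) • (0 : EuclideanSpace ℝ (Fin q)) ∈ Ω + (t + (c - t)) • F :=
    aux_add_mem hFconv ht0 (by linarith) htm ⟨0, h0F, rfl⟩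
  simpa using this

/-- Lipschitz one-sided estimate -/
lemma aux_lip (hΩne : Ω.Nonempty) (hFconv : Convex ℝ F)
    (hF0 : (0 : EuclideanSpace ℝ (Fin q)) ∈ interior F)
    {ε : ℝ} (hε : 0 < ε) (hball : Metric.ball (0:EuclideanSpace ℝ (Fin q)) ε ⊆ F) :
    rhoSR F Ω y ≤ rhoSR F Ω x + (2 / ε) * ‖y - x‖ := by
  rcases eq_or_ne y x with rfl | hne
  · have h1 : (0:ℝ) ≤ (2 / ε) * ‖y - y‖ := by positivity
    linarith
  have hyx : 0 < ‖y - x‖ := by simpa [sub_ne_zero] using norm_pos_iff.2 (sub_ne_zero.2 hne)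
  set s : ℝ := (2 / ε) * ‖y - x‖ with hs
  have hs0 : 0 < s := by positivity
  refine le_of_forall_pos_le_add fun δ hδ => ?_
  have h1 : rhoSR F Ω x < rhoSR F Ω x + δ := by linarith
  have hxm : x ∈ Ω + (rhoSR F Ω x + δ) • F := aux_mem_of_lt hΩne hFconv hF0 h1
  have hvm : y - x ∈ s • F := by
    refine aux_mem_smul hε hball hs0 ?_
    have hse : s * ε = 2 * ‖y - x‖ := by rw [hs]; field_simp
    linarith
  have key : y ∈ Ω + (rhoSR F Ω x + δ + s) • F := by
    have := aux_add_mem hFconv (by have := rhoSR_nonneg (F := F) (Ω := Ω) (x := x); linarith)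
      hs0.le hxm hvm
    simpa using this
  have := rhoSR_le (x := y) (by have := rhoSR_nonneg (F := F) (Ω := Ω) (x := x); linarith) key
  linarith

lemma rhoSR_continuous (hΩne : Ω.Nonempty) (hFconv : Convex ℝ F)
    (hF0 : (0 : EuclideanSpace ℝ (Fin q)) ∈ interior F) :
    Continuous (rhoSR F Ω) := by
  obtain ⟨ε, hε, hball⟩ := Metric.mem_nhds_iff.1 (mem_interior_iff_mem_nhds.1 hF0)
  have hlip : LipschitzWith (Real.toNNReal (2 / ε)) (rhoSR F Ω) := by
    refine LipschitzWith.of_dist_le_mul fun a b => ?_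
    rw [Real.dist_eq, Real.coe_toNNReal _ (by positivity), dist_eq_norm]
    rw [abs_sub_le_iff]
    have h1 := aux_lip (x := b) (y := a) hΩne hFconv hF0 hε hball
    have h2 := aux_lip (x := a) (y := b) hΩne hFconv hF0 hε hball
    rw [norm_sub_rev] at h2
    constructor <;> linarith
  exact hlip.continuous

end Aux

theorem stmt18 {q m n : ℕ} [NeZero n]
    (Ω₀ : Set (EuclideanSpace ℝ (Fin q)))
    (Ω F : Fin m → Set (EuclideanSpace ℝ (Fin q)))
    (hΩ₀ne : Ω₀.Nonempty) (hΩ₀cl : IsClosed Ω₀) (hΩ₀conv : Convex ℝ Ω₀)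
    (hΩne : ∀ i, (Ω i).Nonempty) (hΩcl : ∀ i, IsClosed (Ω i))
    (hΩconv : ∀ i, Convex ℝ (Ω i))
    (hFcpt : ∀ i, IsCompact (F i)) (hFconv : ∀ i, Convex ℝ (F i))
    (hF0 : ∀ i, (0 : EuclideanSpace ℝ (Fin q)) ∈ interior (F i))
    (I : Fin n → Finset (Fin m))
    (hdisj : ∀ k l, k ≠ l → Disjoint (I k) (I l))
    (hcover : ∀ i, ∃ k, i ∈ I k)
    (hbd : Bornology.IsBounded Ω₀ ∨ ∃ i, Bornology.IsBounded (Ω i)) :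
    ∃ xb ∈ Ω₀, ∀ x ∈ Ω₀,
      Finset.univ.sup' Finset.univ_nonempty
        (fun k => ∑ i ∈ I k, rhoSR (F i) (Ω i) xb)
      ≤ Finset.univ.sup' Finset.univ_nonempty
        (fun k => ∑ i ∈ I k, rhoSR (F i) (Ω i) x) := by
  set S : EuclideanSpace ℝ (Fin q) → ℝ := fun x =>
    Finset.univ.sup' Finset.univ_nonempty (fun k => ∑ i ∈ I k, rhoSR (F i) (Ω i) x) with hS
  have hScont : Continuous S := by
    refine Continuous.finset_sup'_apply _ fun k _ => ?_
    exact continuous_finset_sum _ fun i _ => rhoSR_continuous (hΩne i) (hFconv i) (hF0 i)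
  -- ρ_i x ≤ S x for each i
  have hrho_le_S : ∀ i x, rhoSR (F i) (Ω i) x ≤ S x := by
    intro i x
    obtain ⟨k, hk⟩ := hcover i
    have h1 : rhoSR (F i) (Ω i) x ≤ ∑ j ∈ I k, rhoSR (F j) (Ω j) x :=
      Finset.single_le_sum (fun j _ => rhoSR_nonneg) hk
    refine h1.trans ?_
    rw [hS]
    exact Finset.le_sup' (fun k => ∑ j ∈ I k, rhoSR (F j) (Ω j) x) (Finset.mem_univ k)
  rcases hbd with hbd | ⟨i₀, hbd⟩
  · -- Ω₀ compact
    have hcpt : IsCompact Ω₀ := Metric.isCompact_of_isClosed_isBounded hΩ₀cl hbd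
    obtain ⟨xb, hxb, hmin⟩ := hcpt.exists_isMinOn hΩ₀ne hScont.continuousOn
    exact ⟨xb, hxb, fun x hx => hmin hx⟩
  · -- sublevel set compact
    obtain ⟨x₀, hx₀⟩ := hΩ₀ne
    set lam := S x₀ with hlam
    set K := Ω₀ ∩ {x | S x ≤ lam} with hK
    have hKcl : IsClosed K := hΩ₀cl.inter (isClosed_le hScont continuous_const)
    have hx₀K : x₀ ∈ K := ⟨hx₀, by simp only [Set.mem_setOf_eq, hlam, le_refl]⟩
    have hKne : K.Nonempty := ⟨x₀, hx₀K⟩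
    have hKbd : Bornology.IsBounded K := by
      have hsub : K ⊆ Ω i₀ + (lam + 1) • F i₀ := by
        rintro x ⟨-, hxS⟩
        refine aux_mem_of_lt (hΩne i₀) (hFconv i₀) (hF0 i₀) ?_
        have := hrho_le_S i₀ x
        have hx : S x ≤ lam := hxS
        linarith
      refine Bornology.IsBounded.subset ?_ hsub
      exact hbd.add ((hFcpt i₀).isBounded.smul₀ (lam + 1))
    have hKcpt : IsCompact K := Metric.isCompact_of_isClosed_isBounded hKcl hKbd
    obtain ⟨xb, hxb, hmin⟩ := hKcpt.exists_isMinOn hKne hScont.continuousOn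
    refine ⟨xb, hxb.1, fun x hx => ?_⟩
    by_cases hxK : S x ≤ lam
    · exact hmin ⟨hx, hxK⟩
    · have h1 : S xb ≤ lam := hmin hx₀K
      push_neg at hxK
      exact h1.trans hxK.le
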